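/- arXiv:0804.0377 — 6 statements merged into one kernel-verified Lean document; each statement's English description precedes it below -/
import Mathlib

section
/- Let p > 1, h > 0 and 0 < ε < 1/(2√(p-1)). Then the equation ε²z² - z - 1 + p·exp(-z·h) = 0 has at least two real roots λ₁(ε), λ∞(ε) satisfying 0 < λ₁(ε) < 2(p-1) and ε⁻² - 2(p-1) < λ∞(ε) < ε⁻² + 1. -/
/-!
Write `q(z) = c z² - z + (p - 1)` with `c = ε²`. For `z > 0` the exponential term is below `p`, so the
characteristic function lies strictly below `q`. The parabola `q` is symmetric under `z ↦ 1/c - z`, and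
`q(2(p-1)) = (p-1)(4c(p-1) - 1) < 0` exactly when `ε < 1/(2√(p-1))`; so the characteristic function is
negative at `2(p-1)` and at `1/c - 2(p-1)`, while it equals `p - 1 > 0` at `0` and exceeds `c > 0` at
`1/c + 1`. The intermediate value theorem gives one root in each of the two intervals.
-/

open Set

noncomputable def charFun (c p h z : ℝ) : ℝ :=
  c * z ^ 2 - z - 1 + p * Real.exp (-z * h)

namespace charFun

variable {c p h : ℝ}

theorem continuous : Continuous (charFun c p h) := by
  unfold charFun
  fun_prop

theorem zero : charFun c p h 0 = p - 1 := by
  simp [charFun]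
  ring

theorem lt_quadratic (hp : 0 < p) (hh : 0 < h) {z : ℝ} (hz : 0 < z) :
    charFun c p h z < c * z ^ 2 - z + (p - 1) := by
  have hexp : Real.exp (-z * h) < 1 := Real.exp_lt_one_iff.2 (by nlinarith)
  have := mul_lt_mul_of_pos_left hexp hp
  unfold charFun
  linarith

theorem pos_of_nonneg (hp : 0 ≤ p) {z : ℝ} (hz : 0 < c * z ^ 2 - z - 1) : 0 < charFun c p h z := by
  have := mul_nonneg hp (Real.exp_pos (-z * h)).le
  unfold charFun
  linarith

theorem neg_two_mul_sub_one (hp : 1 < p) (hh : 0 < h) (hc : 4 * c * (p - 1) < 1) :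
    charFun c p h (2 * (p - 1)) < 0 := by
  have hq : c * (2 * (p - 1)) ^ 2 - 2 * (p - 1) + (p - 1) = (p - 1) * (4 * c * (p - 1) - 1) := by ring
  have := lt_quadratic (c := c) (p := p) (by linarith) hh (show 0 < 2 * (p - 1) by linarith)
  nlinarith

theorem neg_inv_sub_two_mul_sub_one (hc0 : 0 < c) (hp : 1 < p) (hh : 0 < h)
    (hc : 4 * c * (p - 1) < 1) : charFun c p h (c⁻¹ - 2 * (p - 1)) < 0 := by
  have hinv : 4 * (p - 1) < c⁻¹ := by
    rw [lt_inv_comm₀ (by linarith) hc0, inv_eq_one_div, lt_div_iff₀ (by linarith)]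
    linarith
  have hq : c * (c⁻¹ - 2 * (p - 1)) ^ 2 - (c⁻¹ - 2 * (p - 1)) + (p - 1)
      = (p - 1) * (4 * c * (p - 1) - 1) := by
    field_simp
    ring
  have := lt_quadratic (c := c) (p := p) (by linarith) hh (show 0 < c⁻¹ - 2 * (p - 1) by linarith)
  nlinarith

theorem pos_inv_add_one (hc0 : 0 < c) (hp : 0 ≤ p) : 0 < charFun c p h (c⁻¹ + 1) := by
  refine pos_of_nonneg hp ?_
  have : c * (c⁻¹ + 1) ^ 2 - (c⁻¹ + 1) - 1 = c := by
    field_simp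
    ring
  linarith

theorem exists_root_Ioo_zero (hp : 1 < p) (hh : 0 < h) (hc : 4 * c * (p - 1) < 1) :
    ∃ z ∈ Ioo 0 (2 * (p - 1)), charFun c p h z = 0 :=
  intermediate_value_Ioo' (by linarith) continuous.continuousOn
    ⟨neg_two_mul_sub_one hp hh hc, by rw [zero]; linarith⟩

theorem exists_root_Ioo_inv (hc0 : 0 < c) (hp : 1 < p) (hh : 0 < h) (hc : 4 * c * (p - 1) < 1) :
    ∃ z ∈ Ioo (c⁻¹ - 2 * (p - 1)) (c⁻¹ + 1), charFun c p h z = 0 :=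
  intermediate_value_Ioo (by linarith) continuous.continuousOn
    ⟨neg_inv_sub_two_mul_sub_one hc0 hp hh hc, pos_inv_add_one hc0 (by linarith)⟩

end charFun

theorem four_mul_sq_mul_lt_one_of_lt_one_div {a ε : ℝ} (ha : 0 < a) (hε : 0 ≤ ε)
    (h : ε < 1 / (2 * Real.sqrt a)) : 4 * ε ^ 2 * a < 1 := by
  have hlt : ε * (2 * Real.sqrt a) < 1 := by
    rwa [lt_div_iff₀ (by positivity)] at h
  have := pow_lt_one₀ (by positivity) hlt two_ne_zero
  rwa [mul_pow, mul_pow, Real.sq_sqrt ha.le, show ε ^ 2 * (2 ^ 2 * a) = 4 * ε ^ 2 * a by ring] at this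

theorem two_real_roots_perturbed_char (p h ε : ℝ) (hp : 1 < p) (hh : 0 < h)
    (hε : 0 < ε) (hε' : ε < 1 / (2 * Real.sqrt (p - 1))) :
    ∃ lam1 lamInf : ℝ,
      ε ^ 2 * lam1 ^ 2 - lam1 - 1 + p * Real.exp (-lam1 * h) = 0 ∧
      ε ^ 2 * lamInf ^ 2 - lamInf - 1 + p * Real.exp (-lamInf * h) = 0 ∧
      0 < lam1 ∧ lam1 < 2 * (p - 1) ∧
      ε ^ (-2 : ℤ) - 2 * (p - 1) < lamInf ∧ lamInf < ε ^ (-2 : ℤ) + 1 := by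
  have hc := four_mul_sq_mul_lt_one_of_lt_one_div (sub_pos.2 hp) hε.le hε'
  obtain ⟨lam1, ⟨hlam1_pos, hlam1_lt⟩, hroot1⟩ := charFun.exists_root_Ioo_zero hp hh hc
  obtain ⟨lamInf, ⟨hlamInf_gt, hlamInf_lt⟩, hrootInf⟩ :=
    charFun.exists_root_Ioo_inv (by positivity) hp hh hc
  have hzpow : ε ^ (-2 : ℤ) = (ε ^ 2)⁻¹ := by rw [zpow_neg, zpow_ofNat]
  rw [hzpow]
  exact ⟨lam1, lamInf, hroot1, hrootInf, hlam1_pos, hlam1_lt, hlamInf_gt, hlamInf_lt⟩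
end

section
/- Let p > 1, h > 0 and 0 < ε < 1/(2√(p-1)). Then every real root z of ε²z² - z - 1 + p·exp(-z·h) = 0 is positive. -/
/-! For `z ≤ 0` we have `exp (-z h) ≥ 1`, so `χ(z) ≥ ε²z² - z + (p - 1) > 0`. -/

open Real

theorem one_le_exp_neg_mul_of_nonpos {z h : ℝ} (hz : z ≤ 0) (hh : 0 ≤ h) : 1 ≤ exp (-z * h) :=
  one_le_exp (mul_nonneg (neg_nonneg.mpr hz) hh)

theorem characteristic_pos_of_nonpos (ε : ℝ) {p h z : ℝ} (hp : 1 < p) (hh : 0 ≤ h) (hz : z ≤ 0) :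
    0 < ε ^ 2 * z ^ 2 - z - 1 + p * exp (-z * h) := by
  have hexp := one_le_exp_neg_mul_of_nonpos hz hh
  nlinarith [sq_nonneg (ε * z)]

theorem real_roots_positive_general (p h ε : ℝ) (hp : 1 < p) (hh : 0 < h) :
    ∀ z : ℝ, ε ^ 2 * z ^ 2 - z - 1 + p * Real.exp (-z * h) = 0 → 0 < z := by
  intro z hroot
  by_contra! hz
  exact (characteristic_pos_of_nonpos ε hp hh.le hz).ne' hroot

theorem real_roots_positive (p h ε : ℝ) (hp : 1 < p) (hh : 0 < h)
    (hε : 0 < ε) (hε' : ε < 1 / (2 * Real.sqrt (p - 1))) :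
    ∀ z : ℝ, ε ^ 2 * z ^ 2 - z - 1 + p * Real.exp (-z * h) = 0 → 0 < z :=
  real_roots_positive_general p h ε hp hh
end

section
/- Let p > 1, h > 0, and let λ be the unique positive real root of z = -1 + p·exp(-z·h). If ε > 0 is sufficiently small and λ₁(ε) is the smallest positive real root of ε²z² - z - 1 + p·exp(-z·h) = 0, then λ < λ₁(ε). -/
/-! The map `z ↦ z - p e^{-zh}` is strictly increasing for `p, h ≥ 0`. It equals `-1` at `λ` and
`ε²z² - 1 > -1` at every nonzero root `z` of `χ(·, ε)`, so every such root lies to the right of `λ`.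
In particular `λ < λ₁(ε)` for every `ε > 0`, and `ε₀` may be chosen arbitrarily. -/

open Real

lemma strictMono_sub_mul_exp_neg_mul {p h : ℝ} (hp : 0 ≤ p) (hh : 0 ≤ h) :
    StrictMono fun z : ℝ => z - p * exp (-z * h) := by
  refine strictMono_id.add_monotone fun x y hxy => ?_
  have : exp (-y * h) ≤ exp (-x * h) := exp_le_exp.mpr (by nlinarith)
  simpa using mul_le_mul_of_nonneg_left this hp

lemma lt_of_perturbed_root {p h lam ε z : ℝ} (hp : 0 ≤ p) (hh : 0 ≤ h)
    (hlam : lam = -1 + p * exp (-lam * h)) (hε : ε ≠ 0) (hz : z ≠ 0)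
    (hroot : ε ^ 2 * z ^ 2 - z - 1 + p * exp (-z * h) = 0) : lam < z := by
  refine (strictMono_sub_mul_exp_neg_mul hp hh).lt_iff_lt.mp ?_
  have : 0 < ε ^ 2 * z ^ 2 := by positivity
  show lam - p * exp (-lam * h) < z - p * exp (-z * h)
  linarith

theorem lambda_lt_lambda1_general (p h lam : ℝ) (hp : 1 < p) (hh : 0 < h)
    (hlam : lam = -1 + p * Real.exp (-lam * h)) :
    ∃ ε₀ > 0, ∀ ε : ℝ, 0 < ε → ε < ε₀ →
      ∀ lam1 : ℝ, (0 < lam1 ∧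
          ε ^ 2 * lam1 ^ 2 - lam1 - 1 + p * Real.exp (-lam1 * h) = 0 ∧
          ∀ z : ℝ, 0 < z → ε ^ 2 * z ^ 2 - z - 1 + p * Real.exp (-z * h) = 0 → lam1 ≤ z) →
        lam < lam1 :=
  ⟨1, one_pos, fun _ hε _ _ ⟨hpos, hroot, _⟩ =>
    lt_of_perturbed_root (by linarith) hh.le hlam hε.ne' hpos.ne' hroot⟩

theorem lambda_lt_lambda1 (p h lam : ℝ) (hp : 1 < p) (hh : 0 < h)
    (hlam_pos : 0 < lam) (hlam : lam = -1 + p * Real.exp (-lam * h)) :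
    ∃ ε₀ > 0, ∀ ε : ℝ, 0 < ε → ε < ε₀ →
      ∀ lam1 : ℝ, (0 < lam1 ∧
          ε ^ 2 * lam1 ^ 2 - lam1 - 1 + p * Real.exp (-lam1 * h) = 0 ∧
          ∀ z : ℝ, 0 < z → ε ^ 2 * z ^ 2 - z - 1 + p * Real.exp (-z * h) = 0 → lam1 ≤ z) →
        lam < lam1 :=
  lambda_lt_lambda1_general p h lam hp hh hlam
end

section
/- Let p > 1 and h > 0. Every complex root z = x + iy with y ≠ 0 of z = -1 + p·exp(-z·h) satisfies Re z < λ, where λ is the unique real root of the equation. -/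
/-!
Taking moduli in `z + 1 = p e^{-zh}` gives `|z + 1| = p e^{-h Re z}`. If `Im z ≠ 0` then
`Re z + 1 < |z + 1|`, so `Re z` lies where `x + 1 < p e^{-xh}`; since `x ↦ x + 1 - p e^{-xh}` is
strictly increasing and vanishes at `λ`, this forces `Re z < λ`.
-/

open Complex

theorem norm_add_one_of_eq_neg_one_add_mul_exp {p h : ℝ} (hp : 0 ≤ p) {z : ℂ}
    (hz : z = -1 + (p : ℂ) * exp (-z * (h : ℂ))) :
    ‖z + 1‖ = p * Real.exp (-z.re * h) := by
  rw [show z + 1 = (p : ℂ) * exp (-z * (h : ℂ)) by linear_combination hz, norm_mul, norm_exp,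
    norm_real, Real.norm_of_nonneg hp]
  simp

theorem re_add_one_lt_mul_exp_of_im_ne_zero {p h : ℝ} (hp : 0 ≤ p) {z : ℂ} (hy : z.im ≠ 0)
    (hz : z = -1 + (p : ℂ) * exp (-z * (h : ℂ))) :
    z.re + 1 < p * Real.exp (-z.re * h) := by
  rw [← norm_add_one_of_eq_neg_one_add_mul_exp hp hz]
  calc z.re + 1 = (z + 1).re := by simp
    _ ≤ |(z + 1).re| := le_abs_self _
    _ < ‖z + 1‖ := abs_re_lt_norm.mpr (by simpa using hy)

theorem lt_of_add_one_lt_mul_exp {p h x y : ℝ} (hp : 0 ≤ p) (hh : 0 ≤ h)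
    (hx : x + 1 < p * Real.exp (-x * h)) (hy : y = -1 + p * Real.exp (-y * h)) : x < y := by
  by_contra! hyx
  have : Real.exp (-x * h) ≤ Real.exp (-y * h) :=
    Real.exp_le_exp.mpr (by nlinarith)
  nlinarith [mul_le_mul_of_nonneg_left this hp]

theorem complex_roots_re_lt_lambda (p h lam : ℝ) (hp : 1 < p) (hh : 0 < h)
    (hlam : lam = -1 + p * Real.exp (-lam * h)) :
    ∀ z : ℂ, z.im ≠ 0 → z = -1 + (p : ℂ) * Complex.exp (-z * (h : ℂ)) → z.re < lam := by
  intro z hy hz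
  exact lt_of_add_one_lt_mul_exp (by linarith) hh.le
    (re_add_one_lt_mul_exp_of_im_ne_zero (by linarith) hy hz) hlam
end

section
/- Let μ ≥ 0, h > 0, and let q : ℝ → ℝ be continuous and bounded on (-∞, h]. For x with ‖x‖⁻_μ = sup_{s≤0} e^{-μs}|x(s)| < ∞, define (N x)(t) = ∫_{-∞}^{t} e^{-(t-s)} q(s) x(s-h) ds. Then for all t ≤ h, |(N x)(t)| ≤ (‖x‖⁻_μ · sup_{s ≤ h}|q(s)| / (1 + μ)) · e^{μ(t-h)}. -/
/-!
Bound the delayed factor through the weight, `|x (s - h)| ≤ K e^{μ (s - h)}`, and `q` by `Q`: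
the integrand is then at most a constant times `e^{(1 + μ) s}`, whose integral over `(-∞, t]`
is `e^{(1 + μ) t} / (1 + μ)`.
-/

open MeasureTheory Real Set

lemma norm_integral_Iic_le_of_norm_le_mul_exp {E : Type*} [NormedAddCommGroup E]
    [NormedSpace ℝ E] {f : ℝ → E} {C c t : ℝ} (hc : 0 < c)
    (hf : ∀ s ≤ t, ‖f s‖ ≤ C * exp (c * s)) :
    ‖∫ s in Iic t, f s‖ ≤ C * exp (c * t) / c := by
  calc ‖∫ s in Iic t, f s‖
      ≤ ∫ s in Iic t, C * exp (c * s) :=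
        norm_integral_le_of_norm_le ((integrableOn_exp_mul_Iic hc t).const_mul C)
          (ae_restrict_of_forall_mem measurableSet_Iic hf)
    _ = C * exp (c * t) / c := by
        rw [integral_const_mul, integral_exp_mul_Iic hc, mul_div_assoc]

lemma abs_exp_mul_mul_le_mul_exp {μ h t s a b K Q : ℝ}
    (hb : exp (-μ * (s - h)) * |b| ≤ K) (ha : |a| ≤ Q) :
    |exp (-(t - s)) * a * b| ≤ K * Q * exp (-t - μ * h) * exp ((1 + μ) * s) := by
  have hb' : |b| ≤ K * exp (μ * (s - h)) := by
    rwa [neg_mul, exp_neg, inv_mul_le_iff₀ (exp_pos _), mul_comm] at hb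
  have hexp : exp (-(t - s)) * exp (μ * (s - h)) = exp (-t - μ * h) * exp ((1 + μ) * s) := by
    rw [← exp_add, ← exp_add]
    ring_nf
  calc |exp (-(t - s)) * a * b|
      = exp (-(t - s)) * (|a| * |b|) := by
        rw [abs_mul, abs_mul, abs_of_pos (exp_pos _), mul_assoc]
    _ ≤ exp (-(t - s)) * (Q * (K * exp (μ * (s - h)))) := by
        gcongr
        exact (abs_nonneg a).trans ha
    _ = K * Q * exp (-t - μ * h) * exp ((1 + μ) * s) := by
        linear_combination K * Q * hexp

theorem N_operator_bound_general (μ h : ℝ) (hμ : 0 ≤ μ)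
    (q x : ℝ → ℝ)
    (K Q : ℝ)
    (hK : ∀ s : ℝ, s ≤ 0 → Real.exp (-μ * s) * |x s| ≤ K)
    (hQ : ∀ s : ℝ, s ≤ h → |q s| ≤ Q) :
    ∀ t : ℝ, t ≤ h →
      |∫ s in Set.Iic t, Real.exp (-(t - s)) * q s * x (s - h)| ≤
        K * Q / (1 + μ) * Real.exp (μ * (t - h)) := by
  intro t ht
  have hexp : exp (-t - μ * h) * exp ((1 + μ) * t) = exp (μ * (t - h)) := by
    rw [← exp_add]
    ring_nf
  rw [← Real.norm_eq_abs]
  calc ‖∫ s in Iic t, exp (-(t - s)) * q s * x (s - h)‖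
      ≤ K * Q * exp (-t - μ * h) * exp ((1 + μ) * t) / (1 + μ) :=
        norm_integral_Iic_le_of_norm_le_mul_exp (by linarith : (0 : ℝ) < 1 + μ) fun s hs =>
          abs_exp_mul_mul_le_mul_exp (hK (s - h) (sub_nonpos.2 (hs.trans ht))) (hQ s (hs.trans ht))
    _ = K * Q / (1 + μ) * exp (μ * (t - h)) := by
        rw [mul_assoc (K * Q), hexp, mul_div_right_comm]

theorem N_operator_bound (μ h : ℝ) (hμ : 0 ≤ μ) (hh : 0 < h)
    (q x : ℝ → ℝ) (hq : Continuous q) (hx : Continuous x)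
    (K Q : ℝ)
    (hK : ∀ s : ℝ, s ≤ 0 → Real.exp (-μ * s) * |x s| ≤ K)
    (hQ : ∀ s : ℝ, s ≤ h → |q s| ≤ Q)
    (hint : ∀ t : ℝ, IntegrableOn
      (fun s => Real.exp (-(t - s)) * q s * x (s - h)) (Set.Iic t)) :
    ∀ t : ℝ, t ≤ h →
      |∫ s in Set.Iic t, Real.exp (-(t - s)) * q s * x (s - h)| ≤
        K * Q / (1 + μ) * Real.exp (μ * (t - h)) :=
  N_operator_bound_general μ h hμ q x K Q hK hQ
end

section
/- Let α > 0, ε ≠ 0, and let P : [0, ∞) → ℝ be continuous and integrable. If v : [0, ∞) → ℝ is a C² solution of ε²v''(t) + αv'(t) = P(t), then for all t ≥ 0, |v(t)| ≤ |v(0)| + (ε²/α)|v'(0)|·(1 + e^{-αt/ε²}) + (1/α)∫₀^∞ |P(s)| ds. -/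
/-!
With `w = v'` the equation is the first-order linear equation `ε² w' + α w = P`, so variation of
constants gives `ε² w(t) = ε² e^{-αt/ε²} w(0) + ∫₀ᵗ e^{-α(t-s)/ε²} P(s) ds`, while integrating the
equation once gives `ε² w(t) + α v(t) = ε² w(0) + α v(0) + ∫₀ᵗ P`. Eliminating `w(t)`,
`α v(t) = α v(0) + ε² w(0) (1 - e^{-αt/ε²}) + ∫₀ᵗ (1 - e^{-α(t-s)/ε²}) P(s) ds`,
and the kernel `1 - e^{-α(t-s)/ε²}` lies in `[0, 1]` for `s ≤ t`.
-/

open MeasureTheory Set Real intervalIntegral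

theorem exp_mul_mul_eq_add_integral {c a b : ℝ} {w w' f : ℝ → ℝ}
    (hw : ∀ x ∈ uIcc a b, HasDerivAt w (w' x) x)
    (hode : ∀ x ∈ uIcc a b, w' x + c * w x = f x) (hf : IntervalIntegrable f volume a b) :
    exp (c * b) * w b = exp (c * a) * w a + ∫ s in a..b, exp (c * s) * f s := by
  have hderiv : ∀ x ∈ uIcc a b,
      HasDerivAt (fun s => exp (c * s) * w s) (exp (c * x) * f x) x := by
    intro x hx
    refine (((hasDerivAt_id x).const_mul c).exp.mul (hw x hx)).congr_deriv ?_
    rw [← hode x hx]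
    simp only [id, mul_one]
    ring
  rw [integral_eq_sub_of_hasDerivAt hderiv (hf.continuousOn_mul (by fun_prop))]
  ring

theorem mul_eq_add_integral_of_secondOrder_ode {α ε t : ℝ} (hε : ε ≠ 0)
    {v v' v'' P : ℝ → ℝ} (hv : ∀ x ∈ uIcc 0 t, HasDerivAt v (v' x) x)
    (hv' : ∀ x ∈ uIcc 0 t, HasDerivAt v' (v'' x) x)
    (hode : ∀ x ∈ uIcc 0 t, ε ^ 2 * v'' x + α * v' x = P x)
    (hP : IntervalIntegrable P volume 0 t) :
    α * v t = α * v 0 + ε ^ 2 * v' 0 * (1 - exp (-α * t / ε ^ 2))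
      + ∫ s in 0..t, (1 - exp (-α * (t - s) / ε ^ 2)) * P s := by
  have hε2 : ε ^ 2 ≠ 0 := pow_ne_zero 2 hε
  have hfirst : exp (α / ε ^ 2 * t) * v' t
      = v' 0 + ∫ s in 0..t, exp (α / ε ^ 2 * s) * (P s / ε ^ 2) := by
    simpa using exp_mul_mul_eq_add_integral hv' (c := α / ε ^ 2) (f := fun x => P x / ε ^ 2)
      (fun x hx => by rw [← hode x hx]; field_simp) (hP.div_const _)
  have henergy : ∫ s in 0..t, P s = (ε ^ 2 * v' t + α * v t) - (ε ^ 2 * v' 0 + α * v 0) :=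
    integral_eq_sub_of_hasDerivAt (f := fun x => ε ^ 2 * v' x + α * v x) (fun x hx =>
      hode x hx ▸ ((hv' x hx).const_mul (ε ^ 2)).add ((hv x hx).const_mul α)) hP
  have hkernel : ∫ s in 0..t, (1 - exp (-α * (t - s) / ε ^ 2)) * P s
      = (∫ s in 0..t, P s)
        - ε ^ 2 * exp (-α * t / ε ^ 2) * ∫ s in 0..t, exp (α / ε ^ 2 * s) * (P s / ε ^ 2) := by
    rw [← intervalIntegral.integral_const_mul, ← integral_sub hP]
    · congr 1
      ext s
      rw [show -α * (t - s) / ε ^ 2 = -α * t / ε ^ 2 + α / ε ^ 2 * s by ring, exp_add]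
      field_simp
    · exact ((hP.div_const _).continuousOn_mul (by fun_prop)).const_mul _
  have hexp : exp (-α * t / ε ^ 2) * exp (α / ε ^ 2 * t) = 1 := by
    rw [← exp_add, ← exp_zero]
    congr 1
    ring
  rw [hkernel]
  linear_combination (-1) * henergy - ε ^ 2 * exp (-α * t / ε ^ 2) * hfirst + ε ^ 2 * v' t * hexp

theorem abs_one_sub_exp_le_one {x : ℝ} (hx : x ≤ 0) : |1 - exp x| ≤ 1 := by
  rw [abs_le]
  constructor <;> linarith [exp_pos x, exp_le_one_iff.mpr hx]

theorem abs_integral_mul_le_integral_abs {a b : ℝ} (hab : a ≤ b) {k P : ℝ → ℝ}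
    (hk : ∀ s ∈ Icc a b, |k s| ≤ 1) (hP : IntervalIntegrable P volume a b) :
    |∫ s in a..b, k s * P s| ≤ ∫ s in a..b, |P s| := by
  rw [← Real.norm_eq_abs]
  refine norm_integral_le_of_norm_le hab (Filter.Eventually.of_forall fun s hs => ?_) hP.abs
  rw [Real.norm_eq_abs, abs_mul]
  exact mul_le_of_le_one_left (abs_nonneg _) (hk s (Ioc_subset_Icc_self hs))

theorem intervalIntegral_le_setIntegral_Ici {a b : ℝ} (hab : a ≤ b) {f : ℝ → ℝ}
    (hf : IntegrableOn f (Ici a)) (hf_nonneg : ∀ x ∈ Ici a, 0 ≤ f x) :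
    ∫ x in a..b, f x ≤ ∫ x in Ici a, f x := by
  rw [integral_of_le hab]
  exact setIntegral_mono_set hf ((ae_restrict_mem measurableSet_Ici).mono hf_nonneg)
    (Ioc_subset_Icc_self.trans Icc_subset_Ici_self).eventuallyLE

theorem apriori_bound_general (α ε : ℝ) (hα : 0 < α) (hε : ε ≠ 0)
    (P v : ℝ → ℝ) (hPint : IntegrableOn P (Set.Ici 0))
    (hv : ContDiff ℝ 2 v)
    (heq : ∀ t : ℝ, 0 ≤ t → ε ^ 2 * deriv (deriv v) t + α * deriv v t = P t) :
    ∀ t : ℝ, 0 ≤ t →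
      |v t| ≤ |v 0| + ε ^ 2 / α * |deriv v 0| * (1 + Real.exp (-α * t / ε ^ 2))
        + (1 / α) * ∫ s in Set.Ici (0 : ℝ), |P s| := by
  intro t ht
  have hv1 : Differentiable ℝ v := hv.differentiable (by norm_num)
  have hv' : Differentiable ℝ (deriv v) := by
    simpa using hv.differentiable_iteratedDeriv 1 (by norm_num)
  have hPt : IntervalIntegrable P volume 0 t :=
    (hPint.mono_set (by simp [uIcc_of_le ht, Icc_subset_Ici_self])).intervalIntegrable
  have hformula := mul_eq_add_integral_of_secondOrder_ode hε
    (fun x _ => (hv1 x).hasDerivAt) (fun x _ => (hv' x).hasDerivAt)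
    (fun x hx => heq x (by rw [uIcc_of_le ht] at hx; exact hx.1)) hPt
  have hremainder := abs_integral_mul_le_integral_abs ht
    (k := fun s => 1 - exp (-α * (t - s) / ε ^ 2)) (fun s hs => abs_one_sub_exp_le_one
      (div_nonpos_of_nonpos_of_nonneg (by nlinarith [hs.2]) (sq_nonneg ε))) hPt
  have htail := intervalIntegral_le_setIntegral_Ici ht hPint.abs (fun s _ => abs_nonneg (P s))
  have hdamping : |1 - exp (-α * t / ε ^ 2)| ≤ 1 + exp (-α * t / ε ^ 2) := by
    simpa [abs_of_pos (exp_pos _)] using abs_sub (1 : ℝ) (exp (-α * t / ε ^ 2))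
  have hαv : |α * v t| ≤ α * |v 0| + ε ^ 2 * |deriv v 0| * (1 + exp (-α * t / ε ^ 2))
      + ∫ s in Ici 0, |P s| := by
    rw [hformula]
    refine (abs_add_three _ _ _).trans ?_
    rw [abs_mul, abs_mul, abs_mul, abs_of_pos hα, abs_of_nonneg (sq_nonneg ε)]
    gcongr
    exact hremainder.trans htail
  rw [abs_mul, abs_of_pos hα, ← le_div_iff₀' hα] at hαv
  refine hαv.trans_eq ?_
  field_simp

theorem apriori_bound (α ε : ℝ) (hα : 0 < α) (hε : ε ≠ 0)
    (P v : ℝ → ℝ) (hP : Continuous P) (hPint : IntegrableOn P (Set.Ici 0))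
    (hv : ContDiff ℝ 2 v)
    (heq : ∀ t : ℝ, 0 ≤ t → ε ^ 2 * deriv (deriv v) t + α * deriv v t = P t) :
    ∀ t : ℝ, 0 ≤ t →
      |v t| ≤ |v 0| + ε ^ 2 / α * |deriv v 0| * (1 + Real.exp (-α * t / ε ^ 2))
        + (1 / α) * ∫ s in Set.Ici (0 : ℝ), |P s| :=
  apriori_bound_general α ε hα hε P v hPint hv heq
end
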